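/- Under the algebraic assumptions H^2 = -1, μ^2 = 1, [D,μ] = μ', HD = DH, and with L = [H,μ] = Hμ - μH and |∇| = HD, the following identity holds: [μ|∇| + |∇|μ, L] = -[μ, μ' + Hμ'H]. -/

import Mathlib

/-!
Write `K = μH + Hμ`. Moving `D` past `μ` with `[D,μ] = μ'` gives
`μ|∇| + |∇|μ = K D + Hμ'`. The anticommutator `K` commutes with `L = [H,μ]` as soon as
`μ² = 1` and `H² = -1`, and `[D, L] = Hμ' - μ'H` because `D` commutes with `H`; hence
`[μ|∇| + |∇|μ, L] = K [D, L] + [Hμ', L]`, a polynomial in `H, μ, μ'` alone, which reduces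
to the right-hand side using `H² = -1` and `μμ' = -μ'μ`.
-/

section

variable {R : Type*} [Ring R]

theorem commute_anticommutator_commutator {a b : R}
    (ha : a ^ 2 = 1) (hb : b ^ 2 = -1) : Commute (a * b + b * a) (b * a - a * b) := by
  have ha' : a * a = 1 := by rw [← sq, ha]
  have hb' : b * b = -1 := by rw [← sq, hb]
  show (a * b + b * a) * (b * a - a * b) = (b * a - a * b) * (a * b + b * a)
  calc (a * b + b * a) * (b * a - a * b)
      = a * (b * b) * a - a * b * a * b + b * a * b * a - b * (a * a) * b := by noncomm_ring
    _ = b * a * b * a - a * b * a * b := by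
        simp only [ha', hb', mul_one, mul_neg_one, neg_mul]; noncomm_ring
    _ = b * (a * a) * b + b * a * b * a - a * b * a * b - a * (b * b) * a := by
        simp only [ha', hb', mul_one, mul_neg_one, neg_mul]; noncomm_ring
    _ = (b * a - a * b) * (a * b + b * a) := by noncomm_ring

theorem commutator_commutator_eq_of_commute {D H x : R} (hHD : Commute H D) :
    D * (H * x - x * H) - (H * x - x * H) * D = H * (D * x - x * D) - (D * x - x * D) * H := by
  rw [← sub_eq_zero]
  calc D * (H * x - x * H) - (H * x - x * H) * D - (H * (D * x - x * D) - (D * x - x * D) * H)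
      = (D * H - H * D) * x + x * (H * D - D * H) := by noncomm_ring
    _ = 0 := by rw [hHD.eq]; noncomm_ring

end

/-- With `H² = -1`, `μ² = 1`, `[D,μ] = μ'`, `μμ' + μ'μ = 0`, `HD = DH`,
`L = [H,μ]` and `|∇| = HD`, one has `[μ|∇| + |∇|μ, L] = -[μ, μ' + Hμ'H]`. -/
theorem commutator_B_L {R : Type*} [Ring R] (H D μ μ' : R)
    (hH : H ^ 2 = -1) (hμ : μ ^ 2 = 1) (hD : D * μ - μ * D = μ')
    (hanti : μ * μ' + μ' * μ = 0) (hHD : H * D = D * H) :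
    (μ * (H * D) + (H * D) * μ) * (H * μ - μ * H)
      - (H * μ - μ * H) * (μ * (H * D) + (H * D) * μ)
      = -(μ * (μ' + H * μ' * H) - (μ' + H * μ' * H) * μ) := by
  set K := μ * H + H * μ
  set L := H * μ - μ * H
  have hB : μ * (H * D) + H * D * μ = K * D + H * μ' := by
    rw [← hD]; simp only [K]; noncomm_ring
  have hKL : Commute K L := commute_anticommutator_commutator hμ hH
  have hDL : D * L - L * D = H * μ' - μ' * H := by
    rw [commutator_commutator_eq_of_commute hHD, hD]
  have hH' : H * H = -1 := by rw [← sq, hH]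
  rw [hB]
  calc (K * D + H * μ') * L - L * (K * D + H * μ')
      = K * (D * L - L * D) + (K * L - L * K) * D + (H * μ' * L - L * (H * μ')) := by
        noncomm_ring
    _ = K * (H * μ' - μ' * H) + (H * μ' * L - L * (H * μ')) := by
        rw [hDL, hKL.eq, sub_self, zero_mul, add_zero]
    _ = -(μ * (μ' + H * μ' * H) - (μ' + H * μ' * H) * μ)
          + 2 * μ * (H * H + 1) * μ' - H * (μ * μ' + μ' * μ) * H - (μ * μ' + μ' * μ) := by
        simp only [K, L]; noncomm_ring
    _ = -(μ * (μ' + H * μ' * H) - (μ' + H * μ' * H) * μ) := by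
        rw [hH', hanti]; noncomm_ring
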